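/- Let ⊢⊣, → be relations on a set A such that ⊢⊣ is symmetric and → ∘ ⊢⊣* is well-founded. Then → is Church-Rosser modulo ⊢⊣* if and only if both (i) ← ∘ → ⊆ →* ∘ ⊢⊣* ∘ ←*, and (ii) ⊢⊣ ∘ → ⊆ →+ ∘ ⊢⊣* ∘ ←*. -/

import Mathlib

/-!
Conversions are compared by the multisets of their points, ordered by the multiset extension of
`(⊢⊣* ∘ → ∘ ⊢⊣*)⁺`, which is well-founded because `→ ∘ ⊢⊣*` is. A conversion that is not a
valley `→* ∘ ⊢⊣* ∘ ←*` contains a peak `← ∘ →` or a cliff `⊢⊣ ∘ →` / `← ∘ ⊢⊣`; condition (i)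
resp. (ii) replaces it by a valley all of whose new points lie strictly below the top of the
peak or cliff, which makes the conversion smaller. Conversely, if `a ⊢⊣ b → c` were joined as
`a ⊢⊣* v ←* c`, then `b → c →* v ⊢⊣* b` would be a cycle of `→ ∘ ⊢⊣*`.
-/

namespace ChurchRosserModulo

open Relation Function

variable {A : Type*}

/-- An `r`-path from `a` to `b` whose points other than `b` form the multiset `s`. -/
inductive Path (r : A → A → Prop) : A → A → Multiset A → Prop
  | refl (a : A) : Path r a a 0
  | head {a b c : A} {s : Multiset A} : r a b → Path r b c s → Path r a c (a ::ₘ s)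

namespace Path

variable {r r' : A → A → Prop} {a b c x : A} {s t : Multiset A}

theorem trans (p : Path r a b s) (q : Path r b c t) : Path r a c (s + t) := by
  induction p with
  | refl => simpa using q
  | head h _ ih => simpa only [Multiset.cons_add] using (ih q).head h

theorem mono (h : ∀ x y, r x y → r' x y) (p : Path r a b s) : Path r' a b s := by
  induction p with
  | refl => exact .refl _
  | head hab _ ih => exact ih.head (h _ _ hab)

theorem reflTransGen (p : Path r a b s) : ReflTransGen r a b := by
  induction p with
  | refl => exact .refl
  | head h _ ih => exact ih.head h

theorem exists_of_reflTransGen (h : ReflTransGen r a b) : ∃ s, Path r a b s := by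
  induction h using ReflTransGen.head_induction_on with
  | refl => exact ⟨0, .refl _⟩
  | head hac _ ih => obtain ⟨s, p⟩ := ih; exact ⟨_, p.head hac⟩

theorem reflTransGen_of_mem (p : Path r a b s) (hx : x ∈ s) : ReflTransGen r a x := by
  induction p with
  | refl => simp at hx
  | head h _ ih =>
    rcases Multiset.mem_cons.1 hx with rfl | hx
    · exact .refl
    · exact (ih hx).head h

theorem transGen_of_mem (p : Path r a b s) (hx : x ∈ s) : TransGen r x b := by
  induction p with
  | refl => simp at hx
  | head h p ih =>
    rcases Multiset.mem_cons.1 hx with rfl | hx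
    · exact .head' h p.reflTransGen
    · exact ih hx

end Path

section CutExpand

variable {r : A → A → Prop} {a m : A} {s t : Multiset A}

theorem cutExpand_add_cons (h : ∀ x ∈ s, r x m) (t : Multiset A) :
    CutExpand r (s + t) (m ::ₘ t) := by
  simpa only [Multiset.singleton_add] using (cutExpand_add_right t).2 (cutExpand_singleton h)

theorem cutExpand_cons_self (a : A) (t : Multiset A) : CutExpand r t (a ::ₘ t) := by
  simpa using cutExpand_add_cons (r := r) (s := 0) (m := a) (by simp) t

theorem cutExpand_cons_cons (h : CutExpand r s t) : CutExpand r (a ::ₘ s) (a ::ₘ t) := by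
  simpa only [Multiset.singleton_add] using (cutExpand_add_left {a}).2 h

theorem transGen_cutExpand_cons_cons (h : TransGen (CutExpand r) s t) :
    TransGen (CutExpand r) (a ::ₘ s) (a ::ₘ t) :=
  TransGen.lift _ (fun _ _ => cutExpand_cons_cons) s t h

theorem transGen_cutExpand_add_cons_cons (h : ∀ x ∈ s, r x m) (a : A) (t : Multiset A) :
    TransGen (CutExpand r) (s + t) (a ::ₘ m ::ₘ t) :=
  .tail (.single (cutExpand_add_cons h t)) (cutExpand_cons_self a _)

end CutExpand

variable {hd ar : A → A → Prop} {a b m w x : A} {s t : Multiset A}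

def ConvStep (hd ar : A → A → Prop) (x y : A) : Prop := ar x y ∨ ar y x ∨ hd x y

def Joinable (hd ar : A → A → Prop) (a b : A) : Prop :=
  ∃ u v, ReflTransGen ar a u ∧ ReflTransGen hd u v ∧ ReflTransGen ar b v

def LocallyConfluentModulo (hd ar : A → A → Prop) : Prop :=
  ∀ a b c, ar b a → ar b c → Joinable hd ar a c

def LocallyCoherentModulo (hd ar : A → A → Prop) : Prop :=
  ∀ a b c, hd a b → ar b c → ∃ u v, TransGen ar a u ∧ ReflTransGen hd u v ∧ ReflTransGen ar c v

def Below (hd ar : A → A → Prop) : A → A → Prop :=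
  TransGen fun x m => ∃ p q, ReflTransGen hd m p ∧ ar p q ∧ ReflTransGen hd q x

theorem below_of_ar {p : A} (h₁ : ReflTransGen hd m p) (h₂ : ar p x) : Below hd ar x m :=
  .single ⟨p, x, h₁, h₂, .refl⟩

theorem Below.trans_reflTransGen_ar {y : A} (h : Below hd ar x m) (h' : ReflTransGen ar x y) :
    Below hd ar y m := by
  induction h' with
  | refl => exact h
  | tail _ hzy ih => exact .head ⟨_, _, .refl, hzy, .refl⟩ ih

theorem Below.trans_reflTransGen_hd {y : A} (h : Below hd ar x m) (h' : ReflTransGen hd x y) :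
    Below hd ar y m := by
  obtain ⟨z, ⟨p, q, hzp, hpq, hqx⟩, hzm⟩ := TransGen.head'_iff.1 h
  exact TransGen.head'_iff.2 ⟨z, ⟨p, q, hzp, hpq, hqx.trans h'⟩, hzm⟩

theorem wellFounded_below
    (hwf : ¬∃ f : ℕ → A, ∀ n, Comp ar (ReflTransGen hd) (f n) (f (n + 1))) :
    WellFounded (Below hd ar) := by
  refine WellFounded.transGen (wellFounded_iff_isEmpty_descending_chain.2 ⟨fun ⟨f, hf⟩ => ?_⟩)
  choose p q hp hpq hq using hf
  exact hwf ⟨p, fun n => ⟨q n, hpq n, (hq n).trans (hp (n + 1))⟩⟩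

/-- A valley `a →* u ⊢⊣* v ←* b` whose points other than `b` form `s`. -/
def IsValley (hd ar : A → A → Prop) (a b : A) (s : Multiset A) : Prop :=
  ∃ u v s₁ s₂ s₃, Path ar a u s₁ ∧ Path hd u v s₂ ∧ Path (swap ar) v b s₃ ∧ s = s₁ + s₂ + s₃

theorem Path.convStep_of_valley {u v : A} {s₁ s₂ s₃ : Multiset A} (p₁ : Path ar a u s₁)
    (p₂ : Path hd u v s₂) (p₃ : Path (swap ar) v b s₃) :
    Path (ConvStep hd ar) a b (s₁ + s₂ + s₃) :=
  ((p₁.mono fun _ _ => Or.inl).trans (p₂.mono fun _ _ h => Or.inr (Or.inr h))).trans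
    (p₃.mono fun _ _ h => Or.inr (Or.inl h))

theorem IsValley.joinable (h : IsValley hd ar a b s) : Joinable hd ar a b := by
  obtain ⟨u, v, _, _, _, p₁, p₂, p₃, -⟩ := h
  exact ⟨u, v, p₁.reflTransGen, p₂.reflTransGen, reflTransGen_swap.1 p₃.reflTransGen⟩

theorem exists_path_below_of_joinable (ha : Below hd ar a m) (hw : Below hd ar w m)
    (h : Joinable hd ar a w) :
    ∃ s, Path (ConvStep hd ar) a w s ∧ ∀ x ∈ s, Below hd ar x m := by
  obtain ⟨u, v, hau, huv, hwv⟩ := h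
  obtain ⟨s₁, p₁⟩ := Path.exists_of_reflTransGen hau
  obtain ⟨s₂, p₂⟩ := Path.exists_of_reflTransGen huv
  obtain ⟨s₃, p₃⟩ := Path.exists_of_reflTransGen (reflTransGen_swap.2 hwv)
  refine ⟨_, p₁.convStep_of_valley p₂ p₃, fun x hx => ?_⟩
  rcases Multiset.mem_add.1 hx with hx | hx₃
  · rcases Multiset.mem_add.1 hx with hx₁ | hx₂
    · exact ha.trans_reflTransGen_ar (p₁.reflTransGen_of_mem hx₁)
    · exact (ha.trans_reflTransGen_ar hau).trans_reflTransGen_hd (p₂.reflTransGen_of_mem hx₂)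
  · exact hw.trans_reflTransGen_ar (transGen_swap.1 (p₃.transGen_of_mem hx₃)).to_reflTransGen

def SmallerPath (hd ar : A → A → Prop) (a b : A) (s : Multiset A) : Prop :=
  ∃ s', TransGen (CutExpand (Below hd ar)) s' s ∧ Path (ConvStep hd ar) a b s'

theorem smallerPath_of_peak (hi : LocallyConfluentModulo hd ar) (hma : ar m a) (hmw : ar m w)
    (p : Path (ConvStep hd ar) w b t) :
    SmallerPath hd ar a b (a ::ₘ m ::ₘ t) := by
  obtain ⟨s, q, hs⟩ := exists_path_below_of_joinable (below_of_ar .refl hma)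
    (below_of_ar .refl hmw) (hi a m w hma hmw)
  exact ⟨_, transGen_cutExpand_add_cons_cons hs a t, q.trans p⟩

theorem smallerPath_of_cliff_left [Std.Symm hd] (hii : LocallyCoherentModulo hd ar)
    (ham : hd a m) (hmw : ar m w)
    (p : Path (ConvStep hd ar) w b t) :
    SmallerPath hd ar a b (a ::ₘ m ::ₘ t) := by
  obtain ⟨u, v, hau, huv, hwv⟩ := hii a m w ham hmw
  obtain ⟨a', haa', ha'u⟩ := TransGen.head'_iff.1 hau
  obtain ⟨s, q, hs⟩ := exists_path_below_of_joinable (below_of_ar (.single (symm ham)) haa')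
    (below_of_ar .refl hmw) ⟨u, v, ha'u, huv, hwv⟩
  refine ⟨a ::ₘ (s + t), .single (cutExpand_cons_cons (cutExpand_add_cons hs t)), ?_⟩
  simpa only [Multiset.cons_add] using (Path.head (r := ConvStep hd ar) (.inl haa') q).trans p

theorem smallerPath_of_cliff_right [Std.Symm hd] (hii : LocallyCoherentModulo hd ar)
    (hma : ar m a) (hmw : hd m w)
    (p : Path (ConvStep hd ar) w b t) :
    SmallerPath hd ar a b (a ::ₘ m ::ₘ t) := by
  obtain ⟨u, v, hwu, huv, hav⟩ := hii w m a (symm hmw) hma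
  obtain ⟨w', hww', hw'u⟩ := TransGen.head'_iff.1 hwu
  have hw' : Below hd ar w' m := below_of_ar (.single hmw) hww'
  obtain ⟨s, q, hs⟩ := exists_path_below_of_joinable (below_of_ar .refl hma) hw'
    ⟨v, u, hav, symm huv, hw'u⟩
  refine ⟨w' ::ₘ s + t, transGen_cutExpand_add_cons_cons ?_ a t, ?_⟩
  · exact Multiset.forall_mem_cons.2 ⟨hw', hs⟩
  · simpa only [Multiset.cons_add, Multiset.add_cons] using
      q.trans (Path.head (r := ConvStep hd ar) (.inr (.inl hww')) p)

theorem IsValley.cons_or_smallerPath [Std.Symm hd]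
    (hi : LocallyConfluentModulo hd ar) (hii : LocallyCoherentModulo hd ar)
    {b₁ : A} (hab₁ : ConvStep hd ar a b₁) (hv : IsValley hd ar b₁ b t) :
    IsValley hd ar a b (a ::ₘ t) ∨ SmallerPath hd ar a b (a ::ₘ t) := by
  obtain ⟨u, v, s₁, s₂, s₃, p₁, p₂, p₃, rfl⟩ := hv
  rcases hab₁ with h | h | h
  · exact .inl ⟨u, v, _, s₂, s₃, p₁.head h, p₂, p₃, by simp only [Multiset.cons_add]⟩
  · cases p₁ with
    | head hb₁w p₁ =>
      simpa only [Multiset.cons_add] using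
        .inr (smallerPath_of_peak hi h hb₁w (p₁.convStep_of_valley p₂ p₃))
    | refl =>
      cases p₂ with
      | head hb₁w p₂ =>
        have hlt := smallerPath_of_cliff_right hii h hb₁w ((Path.refl _).convStep_of_valley p₂ p₃)
        simp only [zero_add, Multiset.cons_add] at hlt ⊢
        exact .inr hlt
      | refl => exact .inl ⟨a, a, 0, 0, _, .refl _, .refl _, p₃.head h, by simp⟩
  · cases p₁ with
    | head hb₁w p₁ =>
      simpa only [Multiset.cons_add] using
        .inr (smallerPath_of_cliff_left hii h hb₁w (p₁.convStep_of_valley p₂ p₃))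
    | refl => exact .inl ⟨a, v, 0, _, s₃, .refl _, p₂.head h, p₃, by simp⟩

theorem isValley_or_smallerPath [Std.Symm hd]
    (hi : LocallyConfluentModulo hd ar) (hii : LocallyCoherentModulo hd ar)
    (p : Path (ConvStep hd ar) a b s) :
    IsValley hd ar a b s ∨ SmallerPath hd ar a b s := by
  induction p with
  | refl a => exact .inl ⟨a, a, 0, 0, 0, .refl _, .refl _, .refl _, by simp⟩
  | head h _ ih =>
    rcases ih with hv | ⟨t', ht', p'⟩
    · exact hv.cons_or_smallerPath hi hii h
    · exact .inr ⟨_, transGen_cutExpand_cons_cons ht', p'.head h⟩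

theorem joinable_of_reflTransGen [Std.Symm hd]
    (hwf : ¬∃ f : ℕ → A, ∀ n, Comp ar (ReflTransGen hd) (f n) (f (n + 1)))
    (hi : LocallyConfluentModulo hd ar) (hii : LocallyCoherentModulo hd ar)
    (h : ReflTransGen (ConvStep hd ar) a b) : Joinable hd ar a b := by
  obtain ⟨s, p⟩ := Path.exists_of_reflTransGen h
  induction s using ((wellFounded_below hwf).cutExpand.transGen).induction generalizing a b with
  | _ s ih =>
    rcases isValley_or_smallerPath hi hii p with hv | ⟨s', hs', p'⟩
    · exact hv.joinable
    · exact ih s' hs' p'.reflTransGen p'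

theorem exists_transGen_of_joinable [Std.Symm hd]
    (hwf : ¬∃ f : ℕ → A, ∀ n, Comp ar (ReflTransGen hd) (f n) (f (n + 1)))
    {c : A} (hab : hd a b) (hbc : ar b c) (h : Joinable hd ar a c) :
    ∃ u v, TransGen ar a u ∧ ReflTransGen hd u v ∧ ReflTransGen ar c v := by
  obtain ⟨u, v, hau, huv, hcv⟩ := h
  rcases hau.cases_head with rfl | ⟨w, haw, hwu⟩
  · have hbb : Below hd ar b b :=
      ((below_of_ar .refl hbc).trans_reflTransGen_ar hcv).trans_reflTransGen_hd
        ((symm huv).tail hab)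
    exact ((wellFounded_below hwf).irrefl.irrefl b hbb).elim
  · exact ⟨u, v, .head' haw hwu, huv, hcv⟩

end ChurchRosserModulo

/-- Corollary 2.7: necessary and sufficient conditions for CRM
with a `→⁺` step in condition (ii). -/
theorem crm_iff_criterion_plus {A : Type*} (hd ar : A → A → Prop)
    (hsym : ∀ a b, hd a b → hd b a)
    (hwf : ¬ ∃ f : ℕ → A, ∀ n,
      Relation.Comp ar (Relation.ReflTransGen hd) (f n) (f (n + 1))) :
    (∀ a b, Relation.ReflTransGen (fun x y => ar x y ∨ ar y x ∨ hd x y) a b →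
      ∃ u v, Relation.ReflTransGen ar a u ∧ Relation.ReflTransGen hd u v ∧
        Relation.ReflTransGen ar b v)
    ↔
    ((∀ a b c, ar b a → ar b c →
      ∃ u v, Relation.ReflTransGen ar a u ∧ Relation.ReflTransGen hd u v ∧
        Relation.ReflTransGen ar c v) ∧
     (∀ a b c, hd a b → ar b c →
      ∃ u v, Relation.TransGen ar a u ∧ Relation.ReflTransGen hd u v ∧
        Relation.ReflTransGen ar c v)) := by
  have : Std.Symm hd := ⟨hsym⟩
  refine ⟨fun crm => ⟨fun a b c hba hbc => ?_, fun a b c hab hbc => ?_⟩,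
    fun ⟨hi, hii⟩ a b h => ChurchRosserModulo.joinable_of_reflTransGen hwf hi hii h⟩
  · exact crm a c (.head (Or.inr (Or.inl hba)) (.single (Or.inl hbc)))
  · exact ChurchRosserModulo.exists_transGen_of_joinable hwf hab hbc
      (crm a c (.head (Or.inr (Or.inr hab)) (.single (Or.inl hbc))))
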